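/- arXiv:2305.18849 — 2 statements merged into one kernel-verified Lean document; each statement's English description precedes it below -/
import Mathlib

section
/- Let M ≥ 2 be a squarefree even integer such that −1 is a global norm from K = ℚ(√M). Then the fundamental unit ε_K has norm N(ε_K) = −1 if and only if m = 2 and m' = 2. -/
open NumberField

/-- The real quadratic field `K = ℚ(√M)`, realized inside `ℝ`. -/
noncomputable def Ksqrt (M : ℕ) : IntermediateField ℚ ℝ :=
  IntermediateField.adjoin ℚ {Real.sqrt M}

/-- `ε` is the fundamental unit of `ℚ(√M)`: `ε > 1` and `ε` is minimal among units `> 1`. -/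
def IsFundamentalUnit (M : ℕ) (ε : (𝓞 (Ksqrt M))ˣ) : Prop :=
  1 < (((ε : 𝓞 (Ksqrt M)) : Ksqrt M) : ℝ) ∧
    ∀ u : (𝓞 (Ksqrt M))ˣ, 1 < (((u : 𝓞 (Ksqrt M)) : Ksqrt M) : ℝ) →
      (((ε : 𝓞 (Ksqrt M)) : Ksqrt M) : ℝ) ≤ (((u : 𝓞 (Ksqrt M)) : Ksqrt M) : ℝ)

/-- With `ε_K = (u + v√M)/2` and `g = gcd(u+2, v)`, this is `m = gcd((u+2)/g, M)`,
the gcd of `A` and `M` where `ε_K + 1 = g(A + B√M)`. -/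
def gcdm (M : ℕ) (u v : ℤ) : ℕ := Int.gcd ((u + 2) / (Int.gcd (u + 2) v : ℤ)) (M : ℤ)

/-- With `ε_K = (u + v√M)/2` and `g' = gcd(u-2, v)`, this is `m' = gcd((u-2)/g', M)`,
the gcd of `A'` and `M` where `ε_K - 1 = g'(A' + B'√M)`. -/
def gcdm' (M : ℕ) (u v : ℤ) : ℕ := Int.gcd ((u - 2) / (Int.gcd (u - 2) v : ℤ)) (M : ℤ)

/-!
A unit `ε = (u + v√M)/2` has norm `(u² - Mv²)/4 = ±1`. As `M ≡ 2 mod 4`, this forces `u = 2a`,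
`v = 2b` with `a² - Mb² = ±1`, and then `m = gcd((a+1)/gcd(a+1, b), M)`, `m'` likewise with
`a - 1`. If `a² + 1 = Mb²`, then `a` and `b` are odd, so `(a ± 1)/gcd(a ± 1, b)` is even, and its
gcd with `M` divides `(a² + 1) - (a² - 1) = 2`: hence `m = m' = 2`. If `a² - 1 = Mb²`, then `a`
is odd and `b` even, and one of `a ± 1` is twice an odd number, which makes the corresponding
quotient odd and `m ≠ 2` or `m' ≠ 2`.
-/

open Module Polynomial

theorem Nat.mod_four_eq_two_of_squarefree_of_even {M : ℕ} (hsf : Squarefree M) (hM : Even M) :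
    M % 4 = 2 := by
  have h4 : ¬ 2 * 2 ∣ M := fun h => by simpa using hsf 2 h
  rcases hM with ⟨k, rfl⟩
  omega

theorem Nat.not_isSquare_of_mod_four_eq_two {M : ℕ} (hM : M % 4 = 2) : ¬IsSquare M := by
  rintro ⟨r, rfl⟩
  rcases Nat.even_or_odd' r with ⟨k, rfl | rfl⟩ <;> ring_nf at hM <;> omega

theorem Int.sq_emod_four (x : ℤ) : x ^ 2 % 4 = x % 2 := by
  rcases Int.even_or_odd' x with ⟨k, rfl | rfl⟩ <;> ring_nf <;> omega

theorem Int.sq_sub_mul_sq_emod_four {M : ℤ} (hM : M % 4 = 2) (u v : ℤ) :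
    (u ^ 2 - M * v ^ 2) % 4 = u % 2 + 2 * (v % 2) := by
  obtain ⟨t, rfl⟩ : ∃ t, M = 4 * t + 2 := ⟨M / 4, by omega⟩
  have hMv : (4 * t + 2) * v ^ 2 = 4 * (t * v ^ 2) + 2 * v ^ 2 := by ring
  have hu := Int.sq_emod_four u
  have hv := Int.sq_emod_four v
  omega

theorem Int.mul_ediv_gcd_mul_left {k : ℤ} (hk : 0 < k) (c b : ℤ) :
    k * c / (Int.gcd (k * c) (k * b) : ℤ) = c / (Int.gcd c b : ℤ) := by
  rw [Int.gcd_mul_left, Nat.cast_mul, Int.natAbs_of_nonneg hk.le, Int.mul_ediv_mul_of_pos _ _ hk]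

theorem Int.gcd_ediv_gcd_ne_two_of_odd {c : ℤ} (hc : Odd c) (b M : ℤ) :
    Int.gcd (c / (Int.gcd c b : ℤ)) M ≠ 2 := by
  intro h
  have h2c : ((Int.gcd (c / (Int.gcd c b : ℤ)) M : ℕ) : ℤ) ∣ c :=
    (Int.gcd_dvd_left _ _).trans (Int.ediv_dvd_of_dvd (Int.gcd_dvd_left _ _))
  rw [h] at h2c
  exact Int.not_even_iff_odd.mpr hc (even_iff_two_dvd.mpr h2c)

theorem Int.gcd_ediv_gcd_eq_two_of_sq_add_one_eq {M a b c : ℤ} (h : a ^ 2 + 1 = M * b ^ 2)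
    (hM : 2 ∣ M) (hb : Odd b) (hc : 2 ∣ c) (hca : c ∣ a ^ 2 - 1) :
    Int.gcd (c / (Int.gcd c b : ℤ)) M = 2 := by
  set q := c / (Int.gcd c b : ℤ)
  have hqc : q * Int.gcd c b = c := Int.ediv_mul_cancel (Int.gcd_dvd_left _ _)
  have hg : ¬ 2 ∣ (Int.gcd c b : ℤ) := fun h2 =>
    Int.not_even_iff_odd.mpr hb (even_iff_two_dvd.mpr (h2.trans (Int.gcd_dvd_right _ _)))
  have h2q : 2 ∣ q := (Int.prime_two.dvd_mul.mp (by rwa [hqc])).resolve_right hg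
  have hdvd2 : (Int.gcd q M : ℤ) ∣ 2 := by
    have hsub : (Int.gcd q M : ℤ) ∣ a ^ 2 - 1 :=
      (Int.gcd_dvd_left _ _).trans ((Dvd.intro _ hqc).trans hca)
    have hadd : (Int.gcd q M : ℤ) ∣ a ^ 2 + 1 := h ▸ (Int.gcd_dvd_right _ _).mul_right _
    simpa using dvd_sub hadd hsub
  exact Nat.dvd_antisymm (Int.natCast_dvd_natCast.mp hdvd2) (Int.dvd_gcd h2q hM)

theorem Int.gcd_ediv_gcd_add_one_ne_two_or {a b : ℤ} (ha : Odd a) (hb : Even b) (M : ℤ) :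
    Int.gcd ((a + 1) / (Int.gcd (a + 1) b : ℤ)) M ≠ 2 ∨
      Int.gcd ((a - 1) / (Int.gcd (a - 1) b : ℤ)) M ≠ 2 := by
  obtain ⟨b, rfl⟩ := hb
  rw [← two_mul]
  obtain ⟨c, hc | hc⟩ : ∃ c, a + 1 = 2 * (2 * c + 1) ∨ a - 1 = 2 * (2 * c + 1) := by
    obtain ⟨k, rfl⟩ := ha
    rcases Int.even_or_odd' k with ⟨c, rfl | rfl⟩
    exacts [⟨c, Or.inl (by ring)⟩, ⟨c, Or.inr (by ring)⟩]
  · left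
    rw [hc, Int.mul_ediv_gcd_mul_left two_pos]
    exact Int.gcd_ediv_gcd_ne_two_of_odd (odd_two_mul_add_one c) _ _
  · right
    rw [hc, Int.mul_ediv_gcd_mul_left two_pos]
    exact Int.gcd_ediv_gcd_ne_two_of_odd (odd_two_mul_add_one c) _ _

theorem gcdm_two_mul (M : ℕ) (a b : ℤ) :
    gcdm M (2 * a) (2 * b) = Int.gcd ((a + 1) / (Int.gcd (a + 1) b : ℤ)) M := by
  rw [gcdm, show 2 * a + 2 = 2 * (a + 1) by ring, Int.mul_ediv_gcd_mul_left two_pos]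

theorem gcdm'_two_mul (M : ℕ) (a b : ℤ) :
    gcdm' M (2 * a) (2 * b) = Int.gcd ((a - 1) / (Int.gcd (a - 1) b : ℤ)) M := by
  rw [gcdm', show 2 * a - 2 = 2 * (a - 1) by ring, Int.mul_ediv_gcd_mul_left two_pos]

theorem sq_sub_mul_sq_eq_neg_four_iff_gcdm {M : ℕ} (hM : M % 4 = 2) {u v : ℤ}
    (h : u ^ 2 - M * v ^ 2 = 4 ∨ u ^ 2 - M * v ^ 2 = -4) :
    u ^ 2 - M * v ^ 2 = -4 ↔ gcdm M u v = 2 ∧ gcdm' M u v = 2 := by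
  have hM' : (M : ℤ) % 4 = 2 := by omega
  have hmod := Int.sq_sub_mul_sq_emod_four hM'
  obtain ⟨a, rfl⟩ : ∃ a, u = 2 * a := ⟨u / 2, by have := hmod u v; omega⟩
  obtain ⟨b, rfl⟩ : ∃ b, v = 2 * b := ⟨v / 2, by have := hmod (2 * a) v; omega⟩
  rw [gcdm_two_mul, gcdm'_two_mul]
  have hab := hmod a b
  rcases h with h | h
  · have h1 : a ^ 2 - M * b ^ 2 = 1 := by linarith
    have ha : Odd a := Int.odd_iff.mpr (by omega)
    have hb : Even b := Int.even_iff.mpr (by omega)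
    simp only [h, show (4 : ℤ) ≠ -4 by norm_num, false_iff, not_and_or]
    exact Int.gcd_ediv_gcd_add_one_ne_two_or ha hb M
  · have h1 : a ^ 2 + 1 = M * b ^ 2 := by linarith
    have hb : Odd b := Int.odd_iff.mpr (by omega)
    have ha : Odd a := Int.odd_iff.mpr (by omega)
    have hM2 : (2 : ℤ) ∣ M := by omega
    refine iff_of_true h ⟨?_, ?_⟩
    · exact Int.gcd_ediv_gcd_eq_two_of_sq_add_one_eq h1 hM2 hb (by omega) ⟨a - 1, by ring⟩
    · exact Int.gcd_ediv_gcd_eq_two_of_sq_add_one_eq h1 hM2 hb (by omega) ⟨a + 1, by ring⟩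

theorem Algebra.norm_algebraMap_add_algebraMap_mul {K L : Type*} [Field K] [Field L] [Algebra K L]
    (hL : finrank K L = 2) {s : L} {d : K} (hs : s ^ 2 = algebraMap K L d)
    (hsK : s ∉ Set.range (algebraMap K L)) (p q : K) :
    Algebra.norm K (algebraMap K L p + algebraMap K L q * s) = p ^ 2 - d * q ^ 2 := by
  have hli : LinearIndependent K ![1, s] := by
    refine LinearIndependent.pair_iff.mpr fun a b hab => ?_
    by_cases hb : b = 0
    · subst hb
      simpa using hab
    · refine absurd ⟨-a / b, ?_⟩ hsK
      rw [Algebra.smul_def, Algebra.smul_def, mul_one] at hab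
      rw [map_div₀, map_neg, neg_div, neg_eq_iff_add_eq_zero, div_add' _ _ _ (by simpa using hb),
        div_eq_zero_iff]
      left; linear_combination hab
  let B := basisOfLinearIndependentOfCardEqFinrank hli (by simp [hL])
  have hB : ⇑B = ![1, s] := coe_basisOfLinearIndependentOfCardEqFinrank _ _
  have hmat : Algebra.leftMulMatrix B (algebraMap K L p + algebraMap K L q * s) =
      !![p, d * q; q, p] := by
    rw [Algebra.leftMulMatrix_apply, ← LinearEquiv.eq_symm_apply, LinearMap.toMatrix_symm]
    refine B.ext fun i => ?_
    rw [Matrix.toLin_self]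
    fin_cases i
    · simp [hB, Fin.sum_univ_two, Algebra.smul_def]
    · simp [hB, Fin.sum_univ_two, Algebra.smul_def]
      linear_combination algebraMap K L q * hs
  rw [Algebra.norm_eq_matrix_det B, hmat, Matrix.det_fin_two_of]
  ring

theorem isIntegral_sqrt_natCast (M : ℕ) : IsIntegral ℚ (√M : ℝ) :=
  ⟨X ^ 2 - C (M : ℚ), monic_X_pow_sub_C _ two_ne_zero, by simp⟩

theorem sqrt_natCast_notMem_range {M : ℕ} (hM : ¬IsSquare M) :
    (√M : ℝ) ∉ (algebraMap ℚ ℝ).range := by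
  rintro ⟨q, hq⟩
  exact irrational_sqrt_natCast_iff.mpr hM ⟨q, hq⟩

namespace Ksqrt

variable {M : ℕ}

variable (M) in
noncomputable def sqrt : Ksqrt M := ⟨√M, IntermediateField.mem_adjoin_simple_self ℚ _⟩

@[simp]
theorem coe_sqrt : (sqrt M : ℝ) = √M := rfl

theorem sqrt_sq : sqrt M ^ 2 = algebraMap ℚ (Ksqrt M) M :=
  Subtype.ext (by simp)

theorem finrank_eq_two (hM : ¬IsSquare M) : finrank ℚ (Ksqrt M) = 2 := by
  rw [Ksqrt, IntermediateField.adjoin.finrank (isIntegral_sqrt_natCast M)]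
  refine le_antisymm ?_
    ((minpoly.two_le_natDegree_iff (isIntegral_sqrt_natCast M)).mpr (sqrt_natCast_notMem_range hM))
  have := minpoly.degree_le_of_ne_zero ℚ (√M : ℝ) (X_pow_sub_C_ne_zero two_pos (M : ℚ)) (by simp)
  rw [degree_X_pow_sub_C two_pos] at this
  exact natDegree_le_of_degree_le this

theorem norm_eq (hM : ¬IsSquare M) {x : Ksqrt M} {p q : ℚ} (hx : (x : ℝ) = p + q * √M) :
    Algebra.norm ℚ x = p ^ 2 - M * q ^ 2 := by
  have hsqrt : sqrt M ∉ Set.range (algebraMap ℚ (Ksqrt M)) := fun ⟨r, hr⟩ =>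
    sqrt_natCast_notMem_range hM ⟨r, congrArg Subtype.val hr⟩
  convert Algebra.norm_algebraMap_add_algebraMap_mul (finrank_eq_two hM) sqrt_sq hsqrt p q
  exact Subtype.ext (by simp [hx])

end Ksqrt

theorem stmt_1_general (M : ℕ) (hsf : Squarefree M)
    (ε : (𝓞 (Ksqrt M))ˣ)
    (u v : ℤ)
    (huv : (((ε : 𝓞 (Ksqrt M)) : Ksqrt M) : ℝ) = (u + v * Real.sqrt M) / 2) (hMeven : Even M) :
    Algebra.norm ℚ ((ε : 𝓞 (Ksqrt M)) : Ksqrt M) = -1 ↔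
      gcdm M u v = 2 ∧ gcdm' M u v = 2 := by
  have hM4 : M % 4 = 2 := Nat.mod_four_eq_two_of_squarefree_of_even hsf hMeven
  have hM : ¬IsSquare M := Nat.not_isSquare_of_mod_four_eq_two hM4
  have : FiniteDimensional ℚ (Ksqrt M) :=
    Module.finite_of_finrank_eq_succ (Ksqrt.finrank_eq_two hM)
  have : NumberField (Ksqrt M) := ⟨⟩
  have hnorm :
      Algebra.norm ℚ ((ε : 𝓞 (Ksqrt M)) : Ksqrt M) = ((u ^ 2 - M * v ^ 2 : ℤ) : ℚ) / 4 := by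
    rw [Ksqrt.norm_eq hM (p := u / 2) (q := v / 2) (by push_cast [huv]; ring)]
    push_cast
    ring
  have hunit := NumberField.Units.norm (Ksqrt M) ε
  rw [hnorm, abs_div, abs_of_pos (four_pos : (0 : ℚ) < 4), div_eq_one_iff_eq four_ne_zero] at hunit
  have hpm := (abs_eq zero_le_four).mp (by exact_mod_cast hunit)
  rw [hnorm, div_eq_iff four_ne_zero, neg_one_mul, ← sq_sub_mul_sq_eq_neg_four_iff_gcdm hM4 hpm]
  norm_cast

/-- For `M` even squarefree with `-1` a global norm from `K = ℚ(√M)`,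
the fundamental unit has norm `N(ε_K) = -1` iff `m = 2` and `m' = 2`. -/
theorem stmt_1 (M : ℕ) (hM : 2 ≤ M) (hsf : Squarefree M)
    [FiniteDimensional ℚ (Ksqrt M)]
    (hglob : ∃ x : Ksqrt M, Algebra.norm ℚ x = -1)
    (ε : (𝓞 (Ksqrt M))ˣ) (hε : IsFundamentalUnit M ε)
    (u v : ℤ) (hu : 0 < u) (hv : 0 < v) (hpar : u % 2 = v % 2)
    (huv : (((ε : 𝓞 (Ksqrt M)) : Ksqrt M) : ℝ) = (u + v * Real.sqrt M) / 2) (hMeven : Even M) :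
    Algebra.norm ℚ ((ε : 𝓞 (Ksqrt M)) : Ksqrt M) = -1 ↔
      gcdm M u v = 2 ∧ gcdm' M u v = 2 :=
  stmt_1_general M hsf ε u v huv hMeven
end

section
/- If M = p is a prime number with p ≡ 1 (mod 4), or M = 2, then the fundamental unit of K = ℚ(√M) has norm N(ε_K) = −1. -/
open NumberField

/-! For a prime `p ≡ 1 (mod 4)` the negative Pell equation `a² + 1 = p b²` is solvable: if
`x² = p y² + 1` with `x` minimal, then `x = 2s + 1` and `y = 2z`, so `s (s + 1) = p z²` with
`s`, `s + 1` coprime. If `p ∣ s`, then `s / p` and `s + 1` are squares, giving a smaller Pell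
solution; hence `p ∣ s + 1`, and `s`, `(s + 1) / p` are the squares `a²`, `b²`. For `M = 2` take
`a = b = 1`. The unit `u = a + b√M > 1` has norm `-1`; the minimality of `ε` among units `> 1`
makes `u` a power `εⁿ`, so `N(ε)ⁿ = -1` and `N(ε) = -1`. -/

open Polynomial

lemma Nat.odd_even_of_sq_eq_mul_sq_add_one {p x y : ℕ} (hp : p % 4 = 1)
    (h : x ^ 2 = p * y ^ 2 + 1) : Odd x ∧ Even y := by
  have hp' : p ≡ 1 [MOD 4] := hp
  have h4 : x ^ 2 ≡ 1 * y ^ 2 + 1 [MOD 4] := h ▸ (hp'.mul_right (y ^ 2)).add_right 1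
  rw [one_mul, Nat.ModEq, Nat.pow_mod, Nat.add_mod, Nat.pow_mod y] at h4
  rw [Nat.odd_iff, Nat.even_iff]
  have := Nat.mod_lt x four_pos
  have := Nat.mod_lt y four_pos
  interval_cases hx : x % 4 <;> interval_cases hy : y % 4 <;> simp at h4 <;> omega

lemma Nat.exists_sq_add_one_eq_mul_sq_of_sq_eq_mul_sq_add_one {p x y : ℕ} (hp : p.Prime)
    (h4 : p % 4 = 1) (hy : 0 < y) (h : x ^ 2 = p * y ^ 2 + 1) :
    ∃ a b : ℕ, a ^ 2 + 1 = p * b ^ 2 := by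
  induction x using Nat.strong_induction_on generalizing y with
  | _ x ih =>
  obtain ⟨⟨s, rfl⟩, ⟨z, rfl⟩⟩ := Nat.odd_even_of_sq_eq_mul_sq_add_one h4 h
  have hprod : s * (s + 1) = p * z ^ 2 := by nlinarith
  have hcop : Nat.Coprime s (s + 1) := Nat.coprime_self_add_right.mpr (Nat.coprime_one_right s)
  rcases hp.dvd_mul.mp (Dvd.intro _ hprod.symm) with ⟨t, rfl⟩ | ⟨t, ht⟩
  · -- `t = a²` and `p t + 1 = b²`: the smaller Pell solution `(b, a)`.
    have htz : t * (p * t + 1) = z ^ 2 := mul_left_cancel₀ hp.ne_zero (by rw [← hprod]; ring)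
    have hcop' : Nat.Coprime t (p * t + 1) := hcop.coprime_dvd_left (dvd_mul_left t p)
    obtain ⟨a, rfl⟩ := exists_eq_pow_of_mul_eq_pow (Nat.isUnit_iff.mpr hcop') htz
    obtain ⟨b, hb⟩ := exists_eq_pow_of_mul_eq_pow (Nat.isUnit_iff.mpr hcop'.symm)
      ((mul_comm _ _).trans htz)
    have ha : 0 < a := Nat.pos_of_ne_zero (by rintro rfl; simp [hp.ne_zero] at hprod; omega)
    refine ih b ?_ ha hb.symm
    nlinarith [hp.pos, Nat.le_self_pow two_ne_zero b]
  · have hst : s * t = z ^ 2 := mul_left_cancel₀ hp.ne_zero (by rw [← hprod, ht]; ring)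
    have hcop' : Nat.Coprime s t := hcop.coprime_dvd_right (ht ▸ dvd_mul_left t p)
    obtain ⟨a, rfl⟩ := exists_eq_pow_of_mul_eq_pow (Nat.isUnit_iff.mpr hcop') hst
    obtain ⟨b, rfl⟩ := exists_eq_pow_of_mul_eq_pow (Nat.isUnit_iff.mpr hcop'.symm)
      ((mul_comm _ _).trans hst)
    exact ⟨a, b, ht⟩

lemma Nat.Prime.exists_sq_add_one_eq_mul_sq {p : ℕ} (hp : p.Prime) (h4 : p % 4 = 1) :
    ∃ a b : ℕ, a ^ 2 + 1 = p * b ^ 2 := by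
  obtain ⟨x, y, hxy, hy⟩ := Pell.exists_of_not_isSquare (d := (p : ℤ))
    (by exact_mod_cast hp.pos) (by rw [Int.isSquare_natCast_iff]; exact hp.prime.not_isSquare)
  refine Nat.exists_sq_add_one_eq_mul_sq_of_sq_eq_mul_sq_add_one (x := x.natAbs) hp h4
    (Int.natAbs_pos.mpr hy) ?_
  zify
  simp only [sq_abs]
  linarith

theorem MonoidHom.exists_eq_zpow_of_minimal {G : Type*} [CommGroup G] (f : G →* ℝ)
    (hf : Function.Injective f) {ε : G} (hε : 1 < f ε) (hmin : ∀ v, 1 < f v → f ε ≤ f v)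
    {u : G} (hu : 0 < f u) : ∃ n : ℤ, u = ε ^ n := by
  obtain ⟨n, hn, hn'⟩ := exists_mem_Ico_zpow hu hε
  refine ⟨n, ?_⟩
  have hpos : 0 < f ε ^ n := zpow_pos (by linarith) n
  have hfw : f (u * (ε ^ n)⁻¹) = f u / f ε ^ n := by
    rw [map_mul, map_inv, map_zpow, div_eq_mul_inv]
  have hle : f (u * (ε ^ n)⁻¹) ≤ 1 := by
    refine not_lt.mp fun h => (hmin _ h).not_gt ?_
    rw [hfw, div_lt_iff₀ hpos, ← zpow_one_add₀ (by linarith : f ε ≠ 0), add_comm]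
    exact hn'
  have hge : 1 ≤ f (u * (ε ^ n)⁻¹) := by rwa [hfw, one_le_div hpos]
  rw [← mul_inv_eq_one, ← hf.eq_iff, map_one]
  exact le_antisymm hle hge

theorem Algebra.norm_algebraMap_add_mul_of_basis_sq_eq {R S : Type*} [CommRing R] [CommRing S]
    [Algebra R S] (b : Module.Basis (Fin 2) R S) (hb0 : b 0 = 1) {d : R}
    (hd : b 1 ^ 2 = algebraMap R S d) (q r : R) :
    Algebra.norm R (algebraMap R S q + algebraMap R S r * b 1) = q ^ 2 - d * r ^ 2 := by
  set x := algebraMap R S q + algebraMap R S r * b 1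
  have hx0 : x * b 0 = q • b 0 + r • b 1 := by simp [x, hb0, Algebra.smul_def]
  have hx1 : x * b 1 = (d * r) • b 0 + q • b 1 := by
    simp only [x, hb0, Algebra.smul_def, map_mul, mul_one]
    linear_combination algebraMap R S r * hd
  rw [Algebra.norm_eq_matrix_det b, Matrix.det_fin_two]
  simp [Algebra.leftMulMatrix_eq_repr_mul, hx0, hx1]
  ring

namespace Ksqrt

variable (M : ℕ)

noncomputable def sqrtGen : Ksqrt M := ⟨√M, IntermediateField.subset_adjoin ℚ _ rfl⟩

theorem sqrtGen_sq : sqrtGen M ^ 2 = M :=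
  Subtype.ext (by simp [sqrtGen])

theorem isIntegral_sqrtGen : IsIntegral ℤ (sqrtGen M) :=
  ⟨X ^ 2 - C (M : ℤ), monic_X_pow_sub_C _ two_ne_zero, by simp [sqrtGen_sq]⟩

theorem isIntegral_sqrt : IsIntegral ℚ (√M : ℝ) :=
  ⟨X ^ 2 - C (M : ℚ), monic_X_pow_sub_C _ two_ne_zero, by simp⟩

noncomputable def powerBasis : PowerBasis ℚ (Ksqrt M) :=
  IntermediateField.adjoin.powerBasis (isIntegral_sqrt M)

variable {M}

theorem minpoly_sqrt (hM : ¬ IsSquare M) : minpoly ℚ (√M : ℝ) = X ^ 2 - C (M : ℚ) := by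
  refine (minpoly.eq_of_irreducible_of_monic ?_ (by simp) (monic_X_pow_sub_C _ two_ne_zero)).symm
  refine X_pow_sub_C_irreducible_of_prime Nat.prime_two fun q hq => hM ?_
  rw [← Rat.isSquare_natCast_iff, ← hq]
  exact ⟨q, sq q⟩

theorem powerBasis_dim (hM : ¬ IsSquare M) : (powerBasis M).dim = 2 := by
  rw [powerBasis, IntermediateField.adjoin.powerBasis_dim, minpoly_sqrt hM, natDegree_X_pow_sub_C]

noncomputable def basis (hM : ¬ IsSquare M) : Module.Basis (Fin 2) ℚ (Ksqrt M) :=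
  (powerBasis M).basis.reindex (finCongr (powerBasis_dim hM))

theorem basis_apply (hM : ¬ IsSquare M) (i : Fin 2) : basis hM i = sqrtGen M ^ (i : ℕ) := by
  rw [basis, Module.Basis.reindex_apply, PowerBasis.coe_basis]
  rfl

theorem norm_natCast_add_mul_sqrtGen (hM : ¬ IsSquare M) (a b : ℕ) :
    Algebra.norm ℚ ((a : Ksqrt M) + b * sqrtGen M) = a ^ 2 - M * b ^ 2 := by
  simpa [basis_apply] using Algebra.norm_algebraMap_add_mul_of_basis_sq_eq (basis hM) (d := M)
    (by simp [basis_apply]) (by simp [basis_apply, sqrtGen_sq]) a b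

theorem exists_unit_one_lt_norm_eq_neg_one [NumberField (Ksqrt M)] (hM : ¬ IsSquare M)
    {a b : ℕ} (hab : a ^ 2 + 1 = M * b ^ 2) :
    ∃ u : (𝓞 (Ksqrt M))ˣ, 1 < (((u : 𝓞 (Ksqrt M)) : Ksqrt M) : ℝ) ∧
      Algebra.norm ℚ ((u : 𝓞 (Ksqrt M)) : Ksqrt M) = -1 := by
  set x : 𝓞 (Ksqrt M) := a + b * ⟨sqrtGen M, isIntegral_sqrtGen M⟩
  have hx : (x : Ksqrt M) = a + b * sqrtGen M := by
    simp only [x, map_add, map_natCast]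
    rfl
  have hnorm : Algebra.norm ℚ (x : Ksqrt M) = -1 := by
    rw [hx, norm_natCast_add_mul_sqrtGen hM]
    linear_combination (by exact_mod_cast hab : (a : ℚ) ^ 2 + 1 = M * b ^ 2)
  have hunit : IsUnit x :=
    isUnit_iff_norm.mpr (by rw [RingOfIntegers.coe_norm, hnorm]; norm_num)
  refine ⟨hunit.unit, ?_, hnorm⟩
  have hb : b ≠ 0 := by rintro rfl; simp at hab
  have hM1 : 1 < M := Nat.one_lt_iff_ne_zero_and_ne_one.mpr
    ⟨by rintro rfl; simp at hab, by rintro rfl; exact hM ⟨1, rfl⟩⟩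
  have hsqrt : 1 < √(M : ℝ) := (Real.lt_sqrt zero_le_one).mpr (by norm_num; exact_mod_cast hM1)
  have hb1 : (1 : ℝ) ≤ b := by exact_mod_cast Nat.one_le_iff_ne_zero.mpr hb
  change 1 < ((x : Ksqrt M) : ℝ)
  rw [hx]
  push_cast [sqrtGen]
  nlinarith [(Nat.cast_nonneg a : (0 : ℝ) ≤ a)]

end Ksqrt

protected def NumberField.Units.realEmbedding {K : Type*} [Field K] (φ : K →+* ℝ) :
    (𝓞 K)ˣ →* ℝ :=
  (Units.coeHom ℝ).comp (Units.map (φ.comp (algebraMap (𝓞 K) K)).toMonoidHom)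

theorem NumberField.Units.realEmbedding_injective {K : Type*} [Field K] (φ : K →+* ℝ) :
    Function.Injective (Units.realEmbedding φ) :=
  Units.val_injective.comp (Units.map_injective (φ.injective.comp RingOfIntegers.coe_injective))

/-- If `M = p` is a prime with `p ≡ 1 (mod 4)`, or `M = 2`, then the fundamental unit
of `K = ℚ(√M)` has norm `-1`. -/
theorem stmt_14 (M : ℕ) (hM : (M.Prime ∧ M % 4 = 1) ∨ M = 2)
    [FiniteDimensional ℚ (Ksqrt M)]
    (ε : (𝓞 (Ksqrt M))ˣ) (hε : IsFundamentalUnit M ε) :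
    Algebra.norm ℚ ((ε : 𝓞 (Ksqrt M)) : Ksqrt M) = -1 := by
  have : NumberField (Ksqrt M) := ⟨⟩
  have hp : M.Prime := by rcases hM with ⟨hp, -⟩ | rfl; exacts [hp, Nat.prime_two]
  obtain ⟨a, b, hab⟩ : ∃ a b : ℕ, a ^ 2 + 1 = M * b ^ 2 := by
    rcases hM with ⟨hp, h4⟩ | rfl
    · exact hp.exists_sq_add_one_eq_mul_sq h4
    · exact ⟨1, 1, rfl⟩
  obtain ⟨u, hu, hnorm⟩ := Ksqrt.exists_unit_one_lt_norm_eq_neg_one hp.prime.not_isSquare hab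
  obtain ⟨n, rfl⟩ := MonoidHom.exists_eq_zpow_of_minimal _
    (Units.realEmbedding_injective (Ksqrt M).val.toRingHom) hε.1 hε.2 (zero_lt_one.trans hu)
  rw [Units.coe_coe, Units.coe_zpow, Algebra.norm_zpow] at hnorm
  rcases (abs_eq zero_le_one).mp (Units.norm _ ε) with h | h
  · rw [h, one_zpow] at hnorm
    norm_num at hnorm
  · exact h
end
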